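/- arXiv:1302.4129 — 6 statements merged into one kernel-verified Lean document; each statement's English description precedes it below -/
import Mathlib

section
/- (Optimal repair, correctness half) Let k ≥ 3 be odd and fix an information column j ∈ {0,…,k−1}. Suppose two information arrays a, a′ : {0,…,2^{k−1}−1} × {0,…,k−1} → GF(2) satisfy: (i) a_{i′,j′} = a′_{i′,j′} for every i′ and every j′ ≠ j such that i′(j) = i′(j−1); (ii) h_{i}(a) = h_{i}(a′) for every i with i(j) = i(j−1); and (iii) b_{ℓ_{i,j}}(a) = b_{ℓ_{i,j}}(a′) for every i with i(j) ≠ i(j−1). Then a_{i,j} = a′_{i,j} for every i ∈ {0,…,2^{k−1}−1}. (That is, the erased information column j is determined by the stated half of the elements of each surviving node.) -/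
/-- The `j`-th bit of `i` (`j ≥ 0`). -/
def bitp (i j : ℕ) : Bool := i.testBit j

/-- The `(j-1)`-th bit of `i`, with the convention that the bit at position `-1` is `0`. -/
def bitm (i j : ℕ) : Bool := if j = 0 then false else i.testBit (j - 1)

/-- `i` is dark in column `j` iff `i(j) = i(j-1)`. -/
def dark (i j : ℕ) : Prop := bitp i j = bitm i j

instance (i j : ℕ) : Decidable (dark i j) := by unfold dark; infer_instance

/-- `ℓ_{i,j} = i ⊕ (2^j - 1)`. -/
def ell (i j : ℕ) : ℕ := i ^^^ (2 ^ j - 1)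

/-- The set `B_{i,j}`. -/
def Bset (k i j : ℕ) : Finset (ℕ × ℕ) :=
  if dark i j then
    ((Finset.range k).filter
        (fun j' : ℕ => ((j : ℤ) - (j' : ℤ)) % (k : ℤ) ≤ ((k / 2 : ℕ) : ℤ))).image
      (fun j' => (i, j'))
  else {(i, j)}

/-- The butterfly support set `B_i = ⋃_{j ∈ [k]} B_{ℓ_{i,j}, j}`. -/
def Bline (k i : ℕ) : Finset (ℕ × ℕ) :=
  (Finset.range k).biUnion (fun j => Bset k (ell i j) j)

/-- Horizontal parity `h_i(a)`. -/
def hpar (k : ℕ) (a : ℕ → ℕ → ZMod 2) (i : ℕ) : ZMod 2 :=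
  ∑ j ∈ Finset.range k, a i j

/-- Butterfly parity `b_i(a)`. -/
def bpar (k : ℕ) (a : ℕ → ℕ → ZMod 2) (i : ℕ) : ZMod 2 :=
  ∑ p ∈ Bline k i, a p.1 p.2

/-! A dark row `i` (one with `i(j) = i(j-1)`) has all its other information entries available, so
`a_{i,j}` is read off its horizontal parity. For a white row `i`, the set `B_{ℓ_{i,j}, j}` is just
`{(i, j)}` because `ℓ` is an involution in `i`, and every other summand of `b_{ℓ_{i,j}}` lies in a row
`ℓ_{ℓ_{i,j}, t}` with `t ≠ j`. Such a row differs from `i` in exactly one of the bits `j`, `j - 1`,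
so it is dark and all of its entries, column `j` included, are already known; the butterfly parity
then yields `a_{i,j}`. -/

lemma eq_of_sum_eq_of_forall_mem_erase {ι M : Type*} [DecidableEq ι] [AddCancelCommMonoid M]
    {s : Finset ι} {x : ι} {f g : ι → M} (hx : x ∈ s)
    (hsum : ∑ y ∈ s, f y = ∑ y ∈ s, g y) (hfg : ∀ y ∈ s.erase x, f y = g y) : f x = g x := by
  rw [← Finset.add_sum_erase s f hx, ← Finset.add_sum_erase s g hx,
    Finset.sum_congr rfl hfg] at hsum
  exact add_right_cancel hsum

lemma ell_ell (i j : ℕ) : ell (ell i j) j = i := by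
  rw [ell, ell, Nat.xor_assoc, Nat.xor_self, Nat.xor_zero]

lemma ell_lt_two_pow {i j n : ℕ} (hi : i < 2 ^ n) (hj : j ≤ n) : ell i j < 2 ^ n :=
  Nat.xor_lt_two_pow hi <|
    (Nat.sub_lt (Nat.two_pow_pos j) one_pos).trans_le (Nat.pow_le_pow_right two_pos hj)

lemma testBit_ell (i j m : ℕ) : (ell i j).testBit m = (i.testBit m ^^ decide (m < j)) := by
  simp [ell, Nat.testBit_xor, Nat.testBit_two_pow_sub_one]

lemma dark_ell_ell_iff {i j t : ℕ} (ht : t ≠ j) : dark (ell (ell i j) t) j ↔ ¬ dark i j := by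
  unfold dark bitp bitm
  rcases Nat.eq_zero_or_pos j with rfl | hj
  · simp only [testBit_ell, if_pos, lt_irrefl, Nat.pos_of_ne_zero ht, decide_true, decide_false]
    cases i.testBit 0 <;> decide
  · have hj1 : j - 1 < j := by omega
    rcases Nat.lt_or_gt_of_ne ht with htj | htj
    · simp only [testBit_ell, if_neg hj.ne', lt_irrefl, hj1, htj.not_gt,
        show ¬ j - 1 < t by omega, decide_true, decide_false]
      cases i.testBit j <;> cases i.testBit (j - 1) <;> decide
    · simp only [testBit_ell, if_neg hj.ne', lt_irrefl, hj1, htj, show j - 1 < t by omega,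
        decide_true, decide_false]
      cases i.testBit j <;> cases i.testBit (j - 1) <;> decide

lemma Bset_of_not_dark {k i j : ℕ} (h : ¬ dark i j) : Bset k i j = {(i, j)} := by
  simp [Bset, h]

lemma fst_eq_and_snd_lt_of_mem_Bset {k i j : ℕ} {p : ℕ × ℕ} (hj : j < k) (hp : p ∈ Bset k i j) :
    p.1 = i ∧ p.2 < k := by
  unfold Bset at hp
  split at hp
  · obtain ⟨j', hj', rfl⟩ := Finset.mem_image.mp hp
    exact ⟨rfl, Finset.mem_range.mp (Finset.mem_filter.mp hj').1⟩
  · rw [Finset.mem_singleton.mp hp]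
    exact ⟨rfl, hj⟩

lemma exists_of_mem_Bline {k r : ℕ} {p : ℕ × ℕ} (hp : p ∈ Bline k r) :
    ∃ t < k, p.1 = ell r t ∧ p.2 < k := by
  obtain ⟨t, ht, hpt⟩ := Finset.mem_biUnion.mp hp
  have ht := Finset.mem_range.mp ht
  exact ⟨t, ht, fst_eq_and_snd_lt_of_mem_Bset ht hpt⟩

lemma fst_lt_of_mem_Bline {k n r : ℕ} {p : ℕ × ℕ} (hr : r < 2 ^ n) (hk : k ≤ n + 1)
    (hp : p ∈ Bline k r) : p.1 < 2 ^ n := by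
  obtain ⟨t, ht, hp1, -⟩ := exists_of_mem_Bline hp
  exact hp1 ▸ ell_lt_two_pow hr (by omega)

lemma mem_Bline_ell {k i j : ℕ} (hj : j < k) (hw : ¬ dark i j) : (i, j) ∈ Bline k (ell i j) :=
  Finset.mem_biUnion.mpr ⟨j, Finset.mem_range.mpr hj, by simp [ell_ell, Bset_of_not_dark hw]⟩

lemma dark_fst_of_mem_Bline_ell_erase {k i j : ℕ} {p : ℕ × ℕ} (hw : ¬ dark i j)
    (hp : p ∈ (Bline k (ell i j)).erase (i, j)) : dark p.1 j := by
  obtain ⟨t, ht, hpt⟩ := Finset.mem_biUnion.mp (Finset.mem_of_mem_erase hp)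
  have htj : t ≠ j := by
    rintro rfl
    rw [ell_ell, Bset_of_not_dark hw, Finset.mem_singleton] at hpt
    exact Finset.ne_of_mem_erase hp hpt
  obtain ⟨hp1, -⟩ := fst_eq_and_snd_lt_of_mem_Bset (Finset.mem_range.mp ht) hpt
  exact hp1 ▸ (dark_ell_ell_iff htj).mpr hw

lemma eq_of_hpar_eq {k i j : ℕ} {a a' : ℕ → ℕ → ZMod 2} (hj : j < k)
    (hrow : ∀ j' < k, j' ≠ j → a i j' = a' i j') (h : hpar k a i = hpar k a' i) :
    a i j = a' i j :=
  eq_of_sum_eq_of_forall_mem_erase (f := a i) (Finset.mem_range.mpr hj) h fun j' hj' =>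
    hrow j' (Finset.mem_range.mp (Finset.mem_of_mem_erase hj')) (Finset.ne_of_mem_erase hj')

theorem optimal_repair_correctness_general
    (k : ℕ) (j : ℕ) (hj : j < k)
    (a a' : ℕ → ℕ → ZMod 2)
    (hinfo : ∀ i' < 2 ^ (k - 1), ∀ j' < k, j' ≠ j → dark i' j → a i' j' = a' i' j')
    (hhor : ∀ i < 2 ^ (k - 1), dark i j → hpar k a i = hpar k a' i)
    (hbut : ∀ i < 2 ^ (k - 1), ¬ dark i j →
      bpar k a (ell i j) = bpar k a' (ell i j)) :
    ∀ i < 2 ^ (k - 1), a i j = a' i j := by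
  have hdark : ∀ i < 2 ^ (k - 1), dark i j → a i j = a' i j := fun i hi hd =>
    eq_of_hpar_eq hj (fun j' hj' hne => hinfo i hi j' hj' hne hd) (hhor i hi hd)
  intro i hi
  by_cases hd : dark i j
  · exact hdark i hi hd
  refine eq_of_sum_eq_of_forall_mem_erase (f := fun p : ℕ × ℕ => a p.1 p.2)
    (mem_Bline_ell hj hd) (hbut i hi hd) fun p hp => ?_
  have hp1 : p.1 < 2 ^ (k - 1) :=
    fst_lt_of_mem_Bline (ell_lt_two_pow hi (by omega)) (by omega) (Finset.mem_of_mem_erase hp)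
  have hdp := dark_fst_of_mem_Bline_ell_erase hd hp
  by_cases hpj : p.2 = j
  · simpa only [hpj] using hdark p.1 hp1 hdp
  · obtain ⟨-, -, -, hp2⟩ := exists_of_mem_Bline (Finset.mem_of_mem_erase hp)
    exact hinfo p.1 hp1 p.2 hp2 hpj hdp

/-- Optimal repair, correctness half: the erased information column `j` is determined by
the dark rows of the surviving information columns, the dark horizontal parities, and the
butterfly parities `b_{ℓ_{i,j}}` for white rows `i`. -/
theorem optimal_repair_correctness
    (k : ℕ) (hk : 3 ≤ k) (hodd : Odd k) (j : ℕ) (hj : j < k)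
    (a a' : ℕ → ℕ → ZMod 2)
    (hinfo : ∀ i' < 2 ^ (k - 1), ∀ j' < k, j' ≠ j → dark i' j → a i' j' = a' i' j')
    (hhor : ∀ i < 2 ^ (k - 1), dark i j → hpar k a i = hpar k a' i)
    (hbut : ∀ i < 2 ^ (k - 1), ¬ dark i j →
      bpar k a (ell i j) = bpar k a' (ell i j)) :
    ∀ i < 2 ^ (k - 1), a i j = a' i j :=
  optimal_repair_correctness_general k j hj a a' hinfo hhor hbut
end

section
/- (Worst-case update measure) Let k ≥ 3 be odd. For (i,j) ∈ {0,…,2^{k−1}−1} × {0,…,k−1}, let u(i,j) = 1 + |{m ∈ {0,…,2^{k−1}−1} : (i,j) ∈ B_m}|. Then max over all (i,j) of u(i,j) equals ⌊k/2⌋ + 2; that is, u(i,j) ≤ ⌊k/2⌋ + 2 for all (i,j), and this bound is attained. -/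
/-- The number of parity elements updated when `a_{i,j}` changes. -/
def ucount (k i j : ℕ) : ℕ :=
  1 + ((Finset.range (2 ^ (k - 1))).filter (fun m => (i, j) ∈ Bline k m)).card

lemma ell_injective (i : ℕ) : Function.Injective (ell i) := by
  intro a b h
  have hpow : 2 ^ a - 1 = 2 ^ b - 1 := by
    simpa [ell, ← Nat.xor_assoc] using congrArg (i ^^^ ·) h
  have ha : 1 ≤ 2 ^ a := Nat.one_le_two_pow
  have hb : 1 ≤ 2 ^ b := Nat.one_le_two_pow
  exact Nat.pow_right_injective le_rfl (by omega : 2 ^ a = 2 ^ b)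

lemma dark_zero (j : ℕ) : dark 0 j := by
  simp [dark, bitp, bitm]

lemma fst_eq_of_mem_Bset {k i j₀ : ℕ} {p : ℕ × ℕ} (h : p ∈ Bset k i j₀) : p.1 = i := by
  unfold Bset at h
  split at h
  · obtain ⟨j', -, rfl⟩ := Finset.mem_image.mp h
    rfl
  · rw [Finset.mem_singleton.mp h]

lemma emod_sub_le_of_mem_Bset {k i i' j j₀ : ℕ} (h : (i', j) ∈ Bset k i j₀) :
    ((j₀ : ℤ) - j) % k ≤ ((k / 2 : ℕ) : ℤ) := by
  unfold Bset at h
  split at h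
  · obtain ⟨j', hj', hpair⟩ := Finset.mem_image.mp h
    cases hpair
    exact (Finset.mem_filter.mp hj').2
  · cases Finset.mem_singleton.mp h
    simp only [sub_self, Int.zero_emod]
    positivity

lemma mem_Bset_of_dark {k i j j₀ : ℕ} (hd : dark i j₀) (hj : j < k)
    (hle : ((j₀ : ℤ) - j) % k ≤ ((k / 2 : ℕ) : ℤ)) : (i, j) ∈ Bset k i j₀ := by
  rw [Bset, if_pos hd]
  exact Finset.mem_image_of_mem _ (Finset.mem_filter.mpr ⟨Finset.mem_range.mpr hj, hle⟩)

lemma mem_Bline_iff {k i j m : ℕ} :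
    (i, j) ∈ Bline k m ↔ ∃ j₀ < k, m = ell i j₀ ∧ (i, j) ∈ Bset k i j₀ := by
  simp only [Bline, Finset.mem_biUnion, Finset.mem_range]
  constructor
  · rintro ⟨j₀, hj₀, hmem⟩
    have hi : i = ell m j₀ := fst_eq_of_mem_Bset hmem
    exact ⟨j₀, hj₀, by rw [hi, ell_ell], hi ▸ hmem⟩
  · rintro ⟨j₀, hj₀, rfl, hmem⟩
    exact ⟨j₀, hj₀, by rwa [ell_ell]⟩

lemma ucount_eq_one_add_card {k i j : ℕ} (hk : 0 < k) (hi : i < 2 ^ (k - 1)) :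
    ucount k i j = 1 + ((Finset.range k).filter (fun j₀ => (i, j) ∈ Bset k i j₀)).card := by
  have hlines : (Finset.range (2 ^ (k - 1))).filter (fun m => (i, j) ∈ Bline k m) =
      ((Finset.range k).filter (fun j₀ => (i, j) ∈ Bset k i j₀)).image (ell i) := by
    ext m
    simp only [Finset.mem_filter, Finset.mem_range, Finset.mem_image, mem_Bline_iff]
    constructor
    · rintro ⟨-, j₀, hj₀, rfl, hmem⟩
      exact ⟨j₀, ⟨hj₀, hmem⟩, rfl⟩
    · rintro ⟨j₀, ⟨hj₀, hmem⟩, rfl⟩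
      exact ⟨ell_lt_two_pow hi (by omega), j₀, hj₀, rfl, hmem⟩
  rw [ucount, hlines, Finset.card_image_of_injective _ (ell_injective i)]

lemma emod_sub_injOn_range {k : ℕ} (j : ℤ) :
    Set.InjOn (fun a : ℕ => ((a : ℤ) - j) % k) (Finset.range k) := by
  intro a ha b hb hab
  have hmod : (a : ℤ) ≡ b [ZMOD k] := Int.ModEq.add_right_cancel' (-j) hab
  have ha' : (a : ℤ) < k := by exact_mod_cast Finset.mem_range.mp ha
  have hb' : (b : ℤ) < k := by exact_mod_cast Finset.mem_range.mp hb
  have := hmod.eq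
  rw [Int.emod_eq_of_lt (by positivity) ha', Int.emod_eq_of_lt (by positivity) hb'] at this
  exact_mod_cast this

lemma card_filter_emod_sub_le {k : ℕ} (hk : 0 < k) (j : ℤ) (r : ℕ) :
    ((Finset.range k).filter (fun a : ℕ => ((a : ℤ) - j) % k ≤ r)).card ≤ r + 1 := by
  have hk' : (k : ℤ) ≠ 0 := by exact_mod_cast hk.ne'
  calc ((Finset.range k).filter (fun a : ℕ => ((a : ℤ) - j) % k ≤ r)).card
      ≤ (Finset.range (r + 1)).card := by
        refine Finset.card_le_card_of_injOn (fun a => (((a : ℤ) - j) % k).toNat) ?_ ?_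
        · intro a ha
          have hle := (Finset.mem_filter.mp ha).2
          have hnn := Int.emod_nonneg ((a : ℤ) - j) hk'
          simp only [Finset.coe_range, Set.mem_Iio]
          omega
        · intro a ha b hb hab
          have hanonneg := Int.emod_nonneg ((a : ℤ) - j) hk'
          have hbnonneg := Int.emod_nonneg ((b : ℤ) - j) hk'
          exact emod_sub_injOn_range j (Finset.mem_filter.mp ha).1 (Finset.mem_filter.mp hb).1
            (by simp only at hab ⊢; omega)
    _ = r + 1 := Finset.card_range _

lemma card_filter_mem_Bset_le {k : ℕ} (hk : 0 < k) (i j : ℕ) :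
    ((Finset.range k).filter (fun j₀ => (i, j) ∈ Bset k i j₀)).card ≤ k / 2 + 1 :=
  (Finset.card_le_card (Finset.monotone_filter_right _ fun _ _ => emod_sub_le_of_mem_Bset)).trans
    (card_filter_emod_sub_le hk j (k / 2))

lemma filter_mem_Bset_zero {k : ℕ} :
    (Finset.range k).filter (fun j₀ => ((0 : ℕ), (0 : ℕ)) ∈ Bset k 0 j₀) =
      Finset.range (min k (k / 2 + 1)) := by
  ext j₀
  simp only [Finset.mem_filter, Finset.mem_range, lt_min_iff]
  refine and_congr_right fun hj₀ => ?_
  have hmod : ((j₀ : ℤ) - (0 : ℕ)) % k = j₀ := by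
    rw [Nat.cast_zero, sub_zero]
    exact Int.emod_eq_of_lt (by positivity) (by exact_mod_cast hj₀)
  constructor
  · intro h
    have := emod_sub_le_of_mem_Bset h
    rw [hmod] at this
    omega
  · intro h
    exact mem_Bset_of_dark (dark_zero j₀) (by omega) (by rw [hmod]; omega)

theorem worst_case_update_measure_general (k : ℕ) (hk : 3 ≤ k) :
    (∀ i < 2 ^ (k - 1), ∀ j < k, ucount k i j ≤ k / 2 + 2) ∧
    (∃ i < 2 ^ (k - 1), ∃ j < k, ucount k i j = k / 2 + 2) := by
  have hk0 : 0 < k := by omega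
  refine ⟨fun i hi j _ => ?_, ⟨0, Nat.two_pow_pos _, 0, hk0, ?_⟩⟩
  · rw [ucount_eq_one_add_card hk0 hi]
    have := card_filter_mem_Bset_le hk0 i j
    omega
  · rw [ucount_eq_one_add_card hk0 (Nat.two_pow_pos _), filter_mem_Bset_zero, Finset.card_range]
    omega

/-- Worst-case update measure: `u(i,j) ≤ ⌊k/2⌋ + 2` for all `(i,j)`, and the bound is
attained. -/
theorem worst_case_update_measure (k : ℕ) (hk : 3 ≤ k) (hodd : Odd k) :
    (∀ i < 2 ^ (k - 1), ∀ j < k, ucount k i j ≤ k / 2 + 2) ∧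
    (∃ i < 2 ^ (k - 1), ∃ j < k, ucount k i j = k / 2 + 2) :=
  worst_case_update_measure_general k hk
end

section
/- (Access lemma for white elements) Let k ≥ 3 be odd, i ∈ {0,…,2^{k−1}−1} and j ∈ {0,…,k−1} with i(j) ≠ i(j−1). Then (i,j) ∈ B_{ℓ_{i,j}}, and every pair (i′,j′) ∈ B_{ℓ_{i,j}} with (i′,j′) ≠ (i,j) satisfies i′(j) = i′(j−1). (Thus, when repairing information column j, every accessed information element lies in a row i′ with i′(j) = i′(j−1).) -/
lemma Bset_fst {k a j : ℕ} {p : ℕ × ℕ} (hp : p ∈ Bset k a j) : p.1 = a := by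
  unfold Bset at hp
  split at hp
  · simp only [Finset.mem_image] at hp
    obtain ⟨x, -, rfl⟩ := hp; rfl
  · simp only [Finset.mem_singleton] at hp; subst hp; rfl

lemma dark_xor {i j j' : ℕ} (hwhite : ¬ dark i j) (hne : j' ≠ j) :
    dark (ell (ell i j) j') j := by
  unfold dark bitp bitm ell at *
  simp only [Nat.testBit_xor, Nat.testBit_two_pow_sub_one] at *
  rcases Nat.eq_zero_or_pos j with rfl | hjpos
  · simp only [if_pos rfl] at *
    have : 0 < j' := Nat.pos_of_ne_zero hne
    simp [this]
    simp [Nat.testBit_zero] at hwhite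
    omega
  · have hj0 : j ≠ 0 := Nat.pos_iff_ne_zero.mp hjpos
    simp only [if_neg hj0] at *
    have h1 : ¬ j < j := lt_irrefl j
    have h2 : j - 1 < j := Nat.sub_lt hjpos one_pos
    rcases lt_or_gt_of_ne hne with hlt | hgt
    · have h3 : ¬ j < j' := by omega
      have h4 : ¬ j - 1 < j' := by omega
      simp [h1, h2, h3, h4]
      revert hwhite; cases i.testBit j <;> cases i.testBit (j-1) <;> simp
    · have h3 : j < j' := hgt
      have h4 : j - 1 < j' := by omega
      simp [h1, h2, h3, h4]
      revert hwhite; cases i.testBit j <;> cases i.testBit (j-1) <;> simp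

/-- Access lemma for white elements: if `i(j) ≠ i(j-1)` then `(i,j) ∈ B_{ℓ_{i,j}}`, and
every other pair `(i',j')` in `B_{ℓ_{i,j}}` satisfies `i'(j) = i'(j-1)`. -/
theorem white_access_lemma
    (k : ℕ) (hk : 3 ≤ k) (hodd : Odd k)
    (i j : ℕ) (hi : i < 2 ^ (k - 1)) (hj : j < k) (hwhite : ¬ dark i j) :
    (i, j) ∈ Bline k (ell i j) ∧
    ∀ i' j', (i', j') ∈ Bline k (ell i j) → (i', j') ≠ (i, j) → dark i' j := by
  constructor
  · unfold Bline
    rw [Finset.mem_biUnion]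
    refine ⟨j, Finset.mem_range.mpr hj, ?_⟩
    rw [ell_ell]
    unfold Bset
    rw [if_neg hwhite]
    simp
  · intro i' j'' hmem hne
    unfold Bline at hmem
    rw [Finset.mem_biUnion] at hmem
    obtain ⟨j', hj', hin⟩ := hmem
    rcases eq_or_ne j' j with rfl | hnej
    · rw [ell_ell] at hin
      unfold Bset at hin
      rw [if_neg hwhite] at hin
      simp only [Finset.mem_singleton] at hin
      exact absurd hin hne
    · have h1 : i' = ell (ell i j) j' := Bset_fst hin
      rw [h1]
      exact dark_xor hwhite hnej
end

section
/- (Every information element appears in its own butterfly line) Let k ≥ 3 be odd. For every i ∈ {0,…,2^{k−1}−1} and j ∈ {0,…,k−1}, the pair (i,j) belongs to B_{ℓ_{i,j}}, where ℓ_{i,j} = i ⊕ (2^j − 1). -/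
/-- Every information element appears in its own butterfly line: `(i,j) ∈ B_{ℓ_{i,j}}`. -/
theorem mem_own_butterfly_line
    (k : ℕ) (hk : 3 ≤ k) (hodd : Odd k)
    (i j : ℕ) (hi : i < 2 ^ (k - 1)) (hj : j < k) :
    (i, j) ∈ Bline k (ell i j) := by
  unfold Bline
  rw [Finset.mem_biUnion]
  refine ⟨j, Finset.mem_range.2 hj, ?_⟩
  have hE : ell (ell i j) j = i := by
    unfold ell; simp [Nat.xor_assoc]
  rw [hE]
  unfold Bset
  split
  · rw [Finset.mem_image]
    refine ⟨j, Finset.mem_filter.2 ⟨Finset.mem_range.2 hj, ?_⟩, rfl⟩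
    simp
    positivity
  · simp
end

section
/- (Recovery from the loss of the horizontal node and one information node) Let k ≥ 3 be odd and j ∈ {0,…,k−1}. If two information arrays a, a′ : {0,…,2^{k−1}−1} × {0,…,k−1} → GF(2) satisfy a_{i′,j′} = a′_{i′,j′} for all i′ and all j′ ≠ j, and b_i(a) = b_i(a′) for all i ∈ {0,…,2^{k−1}−1}, then a = a′. (The information array is determined by the surviving information columns together with the butterfly node.) -/
lemma ell_ell_self (m j : ℕ) : ell (ell m j) j = m := by
  unfold ell; rw [Nat.xor_assoc, Nat.xor_self, Nat.xor_zero]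

lemma ell_testBit (m u t : ℕ) : (ell m u).testBit t = ((m.testBit t).xor (decide (t < u))) := by
  simp [ell, Nat.testBit_xor]

lemma darkB (m j j' : ℕ) (h : j' ≠ j) : dark (ell (ell m j) j') j' ↔ ¬ dark m j' := by
  unfold dark bitp bitm
  simp only [ell_testBit]
  rcases Nat.eq_zero_or_pos j' with h0 | h0
  · subst h0
    simp only [if_pos rfl, decide_eq_true (Nat.pos_of_ne_zero (Ne.symm h))]
    cases m.testBit 0 <;> simp
  · rw [if_neg (by omega), if_neg (by omega)]
    have ht : decide (j' - 1 < j') = true := decide_eq_true (by omega)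
    have hf : decide (j' < j') = false := decide_eq_false (by omega)
    by_cases h1 : j' < j
    · rw [decide_eq_true h1, decide_eq_true (show j' - 1 < j by omega), ht, hf]
      cases m.testBit j' <;> cases m.testBit (j' - 1) <;> simp
    · rw [decide_eq_false h1, decide_eq_false (show ¬ j' - 1 < j by omega), ht, hf]
      cases m.testBit j' <;> cases m.testBit (j' - 1) <;> simp

lemma darkC (m j j' t : ℕ) (h1 : t ≠ j) (h2 : t ≠ j') :
    dark (ell (ell m j) j') t ↔ dark m t := by
  unfold dark bitp bitm
  simp only [ell_testBit]
  rcases Nat.eq_zero_or_pos t with h0 | h0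
  · subst h0
    rw [if_pos rfl, if_pos rfl, decide_eq_true (Nat.pos_of_ne_zero (Ne.symm h1)),
      decide_eq_true (Nat.pos_of_ne_zero (Ne.symm h2))]
    cases m.testBit 0 <;> simp
  · rw [if_neg (by omega), if_neg (by omega)]
    have e1 : decide (t < j) = decide (t - 1 < j) := by
      by_cases hh : t < j
      · rw [decide_eq_true hh, decide_eq_true (by omega)]
      · rw [decide_eq_false hh, decide_eq_false (by omega)]
    have e2 : decide (t < j') = decide (t - 1 < j') := by
      by_cases hh : t < j'
      · rw [decide_eq_true hh, decide_eq_true (by omega)]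
      · rw [decide_eq_false hh, decide_eq_false (by omega)]
    rw [e1, e2]
    cases m.testBit t <;> cases m.testBit (t - 1) <;>
      cases decide (t - 1 < j) <;> cases decide (t - 1 < j') <;> simp

lemma mem_Bset_fst {k n t : ℕ} {p : ℕ × ℕ} (hp : p ∈ Bset k n t) : p.1 = n := by
  unfold Bset at hp
  split_ifs at hp
  · obtain ⟨j', _, rfl⟩ := Finset.mem_image.mp hp; rfl
  · simp_all [Finset.mem_singleton]

lemma ell_inj {i x y : ℕ} (h : ell i x = ell i y) : x = y := by
  unfold ell at h
  have h2 : 2 ^ x - 1 = 2 ^ y - 1 := by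
    have h3 : i ^^^ (i ^^^ (2 ^ x - 1)) = i ^^^ (i ^^^ (2 ^ y - 1)) := by rw [h]
    rwa [← Nat.xor_assoc, ← Nat.xor_assoc, Nat.xor_self, Nat.zero_xor, Nat.zero_xor] at h3
  have hx : 1 ≤ 2 ^ x := Nat.one_le_two_pow
  have hy : 1 ≤ 2 ^ y := Nat.one_le_two_pow
  exact Nat.pow_right_injective (le_refl 2) (show (2:ℕ) ^ x = 2 ^ y by omega)

lemma sum_Bline (k i : ℕ) (g : ℕ × ℕ → ZMod 2) :
    ∑ p ∈ Bline k i, g p = ∑ t ∈ Finset.range k, ∑ p ∈ Bset k (ell i t) t, g p := by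
  unfold Bline
  refine Finset.sum_biUnion ?_
  intro x _ y _ hxy
  refine Finset.disjoint_left.mpr ?_
  intro p hp1 hp2
  exact hxy (ell_inj ((mem_Bset_fst hp1).symm.trans (mem_Bset_fst hp2)))

lemma sum_Bset (k j n t : ℕ) (f : ℕ → ℕ → ZMod 2) (hj : j < k) (ht : t < k)
    (hvan : ∀ t' < k, t' ≠ j → f n t' = 0) :
    ∑ p ∈ Bset k n t, f p.1 p.2 =
      if t = j then f n j
      else if dark n t ∧ ((t : ℤ) - (j : ℤ)) % (k : ℤ) ≤ ((k / 2 : ℕ) : ℤ) then f n j else 0 := by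
  have hk0 : (0:ℤ) ≤ ((k / 2 : ℕ) : ℤ) := Int.ofNat_nonneg _
  unfold Bset
  by_cases hd : dark n t
  · rw [if_pos hd, Finset.sum_image (by intro x _ y _ hxy; simpa using hxy)]
    rw [Finset.sum_congr rfl (g := fun j' => if j' = j then f n j else 0)
      (by
        intro x hx
        show f n x = if x = j then f n j else 0
        by_cases hxj : x = j
        · rw [if_pos hxj, hxj]
        · rw [if_neg hxj,
            hvan x (Finset.mem_range.mp (Finset.mem_filter.mp hx).1) hxj]),
      Finset.sum_ite_eq' _ j (fun _ => f n j)]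
    have hjm : (j ∈ (Finset.range k).filter
        (fun j' : ℕ => ((t : ℤ) - (j' : ℤ)) % (k : ℤ) ≤ ((k / 2 : ℕ) : ℤ))) ↔
        ((t : ℤ) - (j : ℤ)) % (k : ℤ) ≤ ((k / 2 : ℕ) : ℤ) := by
      simp [Finset.mem_filter, Finset.mem_range, hj]
    simp only [hjm]
    by_cases htj : t = j
    · subst htj
      rw [if_pos rfl, if_pos (by simpa using hk0)]
    · rw [if_neg htj]
      simp only [hd, true_and]
  · rw [if_neg hd, Finset.sum_singleton]
    by_cases htj : t = j
    · rw [if_pos htj, htj]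
    · rw [if_neg htj, if_neg (by tauto), hvan t ht htj]

/-- Recovery from the loss of the horizontal node and one information node: the
information array is determined by the surviving information columns and the butterfly
node. -/
theorem recovery_horizontal_and_info
    (k : ℕ) (hk : 3 ≤ k) (hodd : Odd k) (j : ℕ) (hj : j < k)
    (a a' : ℕ → ℕ → ZMod 2)
    (hinfo : ∀ i' < 2 ^ (k - 1), ∀ j' < k, j' ≠ j → a i' j' = a' i' j')
    (hbut : ∀ i < 2 ^ (k - 1), bpar k a i = bpar k a' i) :
    ∀ i < 2 ^ (k - 1), ∀ j' < k, a i j' = a' i j' := by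
  have hvan : ∀ n < 2 ^ (k - 1), ∀ t' < k, t' ≠ j → a n t' - a' n t' = 0 :=
    fun n hn t' ht' hne => sub_eq_zero.mpr (hinfo n hn t' ht' hne)
  have hlt : ∀ n < 2 ^ (k - 1), ∀ t < k, ell n t < 2 ^ (k - 1) := by
    intro n hn t ht
    refine Nat.xor_lt_two_pow hn ?_
    have h1 : 2 ^ t ≤ 2 ^ (k - 1) := Nat.pow_le_pow_right (by norm_num) (by omega)
    have h2 : 1 ≤ 2 ^ t := Nat.one_le_two_pow
    omega
  have heq : ∀ m < 2 ^ (k - 1),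
      a m j - a' m j
        = - ∑ t ∈ (Finset.range k).erase j,
            (if dark (ell (ell m j) t) t ∧
                ((t : ℤ) - (j : ℤ)) % (k : ℤ) ≤ ((k / 2 : ℕ) : ℤ)
             then a (ell (ell m j) t) j - a' (ell (ell m j) t) j else 0) := by
    intro m hm
    have hi0lt : ell m j < 2 ^ (k - 1) := hlt m hm j hj
    have h0 : ∑ p ∈ Bline k (ell m j), (a p.1 p.2 - a' p.1 p.2) = 0 := by
      rw [Finset.sum_sub_distrib]
      have hb := hbut (ell m j) hi0lt
      unfold bpar at hb
      rw [hb, sub_self]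
    rw [sum_Bline] at h0
    rw [Finset.sum_congr rfl (fun t htm =>
      sum_Bset k j (ell (ell m j) t) t (fun x y => a x y - a' x y) hj
        (Finset.mem_range.mp htm)
        (hvan _ (hlt (ell m j) hi0lt t (Finset.mem_range.mp htm))))] at h0
    rw [← Finset.add_sum_erase _ _ (Finset.mem_range.mpr hj)] at h0
    rw [if_pos rfl, ell_ell_self] at h0
    beta_reduce at h0
    rw [Finset.sum_congr rfl (g := fun t =>
        (if dark (ell (ell m j) t) t ∧
            ((t : ℤ) - (j : ℤ)) % (k : ℤ) ≤ ((k / 2 : ℕ) : ℤ)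
         then a (ell (ell m j) t) j - a' (ell (ell m j) t) j else 0))
      (fun t htm => by
        rw [if_neg (Finset.mem_erase.mp htm).1])] at h0
    exact eq_neg_of_add_eq_zero_left h0
  have main : ∀ N : ℕ, ∀ m, m < 2 ^ (k - 1) →
      ((Finset.range k).filter (fun t => t ≠ j ∧ ¬ dark m t)).card ≤ N →
      a m j - a' m j = 0 := by
    intro N
    induction N with
    | zero =>
      intro m hm hcard
      rw [heq m hm, Finset.sum_congr rfl (g := fun _ => (0 : ZMod 2))
        (fun t htm => by
          obtain ⟨htj, htk⟩ := Finset.mem_erase.mp htm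
          rw [if_neg]
          rintro ⟨hdk, -⟩
          have hlight : ¬ dark m t := (darkB m j t htj).mp hdk
          have : t ∈ (Finset.range k).filter (fun t => t ≠ j ∧ ¬ dark m t) :=
            Finset.mem_filter.mpr ⟨htk, htj, hlight⟩
          have := Finset.card_pos.mpr ⟨t, this⟩
          omega)]
      simp
    | succ N ih =>
      intro m hm hcard
      rw [heq m hm, Finset.sum_congr rfl (g := fun _ => (0 : ZMod 2))
        (fun t htm => by
          obtain ⟨htj, htk⟩ := Finset.mem_erase.mp htm
          by_cases hc : dark (ell (ell m j) t) t ∧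
              ((t : ℤ) - (j : ℤ)) % (k : ℤ) ≤ ((k / 2 : ℕ) : ℤ)
          · rw [if_pos hc]
            have hlight : ¬ dark m t := (darkB m j t htj).mp hc.1
            have hmemt : t ∈ (Finset.range k).filter (fun t => t ≠ j ∧ ¬ dark m t) :=
              Finset.mem_filter.mpr ⟨htk, htj, hlight⟩
            have hnlt : ell (ell m j) t < 2 ^ (k - 1) :=
              hlt (ell m j) (hlt m hm j hj) t (Finset.mem_range.mp htk)
            refine ih (ell (ell m j) t) hnlt ?_
            have hsub : (Finset.range k).filter
                (fun t' => t' ≠ j ∧ ¬ dark (ell (ell m j) t) t') ⊆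
                ((Finset.range k).filter (fun t' => t' ≠ j ∧ ¬ dark m t')).erase t := by
              intro t' ht'
              obtain ⟨ht'k, ht'j, ht'd⟩ := Finset.mem_filter.mp ht'
              have ht't : t' ≠ t := fun h => ht'd (h ▸ hc.1)
              exact Finset.mem_erase.mpr ⟨ht't,
                Finset.mem_filter.mpr ⟨ht'k, ht'j,
                  fun hd => ht'd ((darkC m j t t' ht'j ht't).mpr hd)⟩⟩
            have := Finset.card_le_card hsub
            rw [Finset.card_erase_of_mem hmemt] at this
            omega
          · rw [if_neg hc])]
      simp
  intro i hi j' hj'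
  by_cases hjj : j' = j
  · subst hjj
    exact sub_eq_zero.mp (main _ i hi (le_refl _))
  · exact hinfo i hi j' hj' hjj
end

section
/- (Key membership claim in the two-information-node decoding) Let k ≥ 3 be odd, and let j_0, j_1 ∈ {0,…,k−1} be distinct with (j_1 − j_0) mod k ≤ ⌊k/2⌋. Let i_0 ∈ {0,…,2^{k−1}−1} satisfy i_0(j_1) = i_0(j_1−1), and set i_1 = i_0 ⊕ (2^{j_0} − 1) ⊕ (2^{j_1} − 1). Then: (i) ℓ_{i_1,j_0} = ℓ_{i_0,j_1}, i.e., i_1 ⊕ (2^{j_0} − 1) = i_0 ⊕ (2^{j_1} − 1); and (ii) the three pairs (i_1, j_0), (i_0, j_0), and (i_0, j_1) all belong to B_{ℓ_{i_1,j_0}}. -/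
/-- Key membership claim in the two-information-node decoding:
`ℓ_{i₁,j₀} = ℓ_{i₀,j₁}` and the three pairs `(i₁,j₀)`, `(i₀,j₀)`, `(i₀,j₁)` all
belong to `B_{ℓ_{i₁,j₀}}`. -/
theorem key_membership_two_node_decoding
    (k : ℕ) (hk : 3 ≤ k) (hodd : Odd k)
    (j₀ j₁ : ℕ) (hj₀ : j₀ < k) (hj₁ : j₁ < k) (hne : j₀ ≠ j₁)
    (hdist : ((j₁ : ℤ) - (j₀ : ℤ)) % (k : ℤ) ≤ ((k / 2 : ℕ) : ℤ))
    (i₀ : ℕ) (hi₀ : i₀ < 2 ^ (k - 1)) (hdark : dark i₀ j₁)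
    (i₁ : ℕ) (hi₁ : i₁ = i₀ ^^^ (2 ^ j₀ - 1) ^^^ (2 ^ j₁ - 1)) :
    ell i₁ j₀ = ell i₀ j₁ ∧
    (i₁, j₀) ∈ Bline k (ell i₁ j₀) ∧
    (i₀, j₀) ∈ Bline k (ell i₁ j₀) ∧
    (i₀, j₁) ∈ Bline k (ell i₁ j₀) := by

  have hL : ell i₁ j₀ = ell i₀ j₁ := by
    subst hi₁
    simp only [ell, Nat.xor_assoc]
    rw [Nat.xor_comm (2 ^ j₁ - 1) (2 ^ j₀ - 1), ← Nat.xor_assoc (2 ^ j₀ - 1),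
      Nat.xor_self, Nat.zero_xor]
  have hL0 : ell (ell i₁ j₀) j₀ = i₁ := by
    simp [ell, Nat.xor_assoc]
  have hL1 : ell (ell i₁ j₀) j₁ = i₀ := by
    rw [hL]; simp [ell, Nat.xor_assoc]
  refine ⟨hL, ?_, ?_, ?_⟩
  · rw [Bline, Finset.mem_biUnion]
    refine ⟨j₀, Finset.mem_range.2 hj₀, ?_⟩
    rw [hL0, Bset]
    by_cases h : dark i₁ j₀
    · rw [if_pos h, Finset.mem_image]
      refine ⟨j₀, Finset.mem_filter.2 ⟨Finset.mem_range.2 hj₀, ?_⟩, rfl⟩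
      simp only [sub_self, Int.zero_emod]
      positivity
    · rw [if_neg h]; simp
  · rw [Bline, Finset.mem_biUnion]
    refine ⟨j₁, Finset.mem_range.2 hj₁, ?_⟩
    rw [hL1, Bset, if_pos hdark, Finset.mem_image]
    exact ⟨j₀, Finset.mem_filter.2 ⟨Finset.mem_range.2 hj₀, hdist⟩, rfl⟩
  · rw [Bline, Finset.mem_biUnion]
    refine ⟨j₁, Finset.mem_range.2 hj₁, ?_⟩
    rw [hL1, Bset, if_pos hdark, Finset.mem_image]
    refine ⟨j₁, Finset.mem_filter.2 ⟨Finset.mem_range.2 hj₁, ?_⟩, rfl⟩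
    simp only [sub_self, Int.zero_emod]
    positivity
end
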